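/- arXiv:1205.6990 — 2 statements merged into one kernel-verified Lean document; each statement's English description precedes it below -/
import Mathlib

section
/- (Strong boolean Nullstellensatz) Let J be an ideal of ℂ[x_1, …, x_N] containing the ideal I generated by {x_i² − x_i : 1 ≤ i ≤ N}. Then a polynomial f belongs to J if and only if f vanishes at every point of the boolean variety Z(J) = {x ∈ {0,1}^N : g(x) = 0 for all g ∈ J}. In particular, every ideal containing I is radical. -/
open MvPolynomial

/-- The ideal `I` generated by the polynomials `xᵢ² − xᵢ`. -/
noncomputable def boolIdeal (N : ℕ) : Ideal (MvPolynomial (Fin N) ℂ) :=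
  Ideal.span (Set.range fun i : Fin N => X i ^ 2 - X i)

/-- `x` is a boolean point, i.e. `x ∈ {0,1}^N`. -/
def IsBooleanPoint (N : ℕ) (x : Fin N → ℂ) : Prop :=
  ∀ i, x i = 0 ∨ x i = 1

/-- The boolean variety of an ideal: `Z(J) = {x ∈ {0,1}^N : g(x) = 0 for all g ∈ J}`. -/
def idealVariety (N : ℕ) (J : Ideal (MvPolynomial (Fin N) ℂ)) : Set (Fin N → ℂ) :=
  {x | IsBooleanPoint N x ∧ ∀ g ∈ J, eval x g = 0}

/-- Indicator polynomial of a boolean point. -/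
noncomputable def eA (N : ℕ) (a : Fin N → Bool) : MvPolynomial (Fin N) ℂ :=
  ∏ i, if a i then X i else 1 - X i

/-- The complex point corresponding to a boolean point. -/
def bpt (N : ℕ) (a : Fin N → Bool) : Fin N → ℂ := fun i => if a i then 1 else 0

lemma gen_mem (N : ℕ) (i : Fin N) :
    (X i ^ 2 - X i : MvPolynomial (Fin N) ℂ) ∈ boolIdeal N :=
  Ideal.subset_span ⟨i, rfl⟩

lemma bpt_isBoolean (N : ℕ) (a : Fin N → Bool) : IsBooleanPoint N (bpt N a) := by
  intro i
  by_cases h : a i <;> simp [bpt, h]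

lemma key (N : ℕ) (a : Fin N → Bool) (i : Fin N) :
    X i * eA N a - bpt N a i • eA N a ∈ boolIdeal N := by
  have h := Finset.mul_prod_erase Finset.univ
    (fun j => if a j then X j else (1 - X j : MvPolynomial (Fin N) ℂ)) (Finset.mem_univ i)
  set P := ∏ j ∈ Finset.univ.erase i, (if a j then X j else (1 - X j : MvPolynomial (Fin N) ℂ))
    with hP
  have heA : eA N a = (if a i then X i else 1 - X i) * P := by rw [eA, ← h]
  by_cases hai : a i
  · rw [heA, hai]
    simp only [if_true, bpt, hai, one_smul]
    have : X i * (X i * P) - X i * P = (X i ^ 2 - X i) * P := by ring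
    rw [this]
    exact Ideal.mul_mem_right _ _ (gen_mem N i)
  · rw [heA]
    simp only [if_neg hai, bpt, zero_smul, sub_zero]
    have : X i * ((1 - X i) * P) = -((X i ^ 2 - X i) * P) := by ring
    rw [this]
    exact neg_mem (Ideal.mul_mem_right _ _ (gen_mem N i))

lemma eval_eA (N : ℕ) (a b : Fin N → Bool) :
    eval (bpt N b) (eA N a) = if a = b then 1 else 0 := by
  rw [eA, map_prod]
  by_cases hab : a = b
  · subst hab
    rw [if_pos rfl]
    apply Finset.prod_eq_one
    intro j _
    by_cases h : a j <;> simp [h, bpt]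
  · rw [if_neg hab]
    obtain ⟨j, hj⟩ : ∃ j, a j ≠ b j := by
      by_contra hc
      push_neg at hc
      exact hab (funext hc)
    apply Finset.prod_eq_zero (Finset.mem_univ j)
    by_cases h : a j
    · have hb : b j = false := by
        cases hbj : b j
        · rfl
        · exact absurd (by rw [h, hbj]) hj
      simp [h, hb, bpt]
    · have hb : b j = true := by
        cases hbj : b j
        · exact absurd (by rw [hbj]; simp [h]) hj
        · rfl
      simp [h, hb, bpt]

lemma absorb (N : ℕ) (a : Fin N → Bool) (g : MvPolynomial (Fin N) ℂ) :
    g * eA N a - eval (bpt N a) g • eA N a ∈ boolIdeal N := by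
  induction g using MvPolynomial.induction_on with
  | C c =>
      have : C c * eA N a - eval (bpt N a) (C c) • eA N a = 0 := by
        rw [eval_C, smul_eq_C_mul, sub_self]
      rw [this]; exact zero_mem _
  | add p q hp hq =>
      have : (p + q) * eA N a - eval (bpt N a) (p + q) • eA N a =
          (p * eA N a - eval (bpt N a) p • eA N a) +
          (q * eA N a - eval (bpt N a) q • eA N a) := by
        simp only [map_add, add_smul, smul_eq_C_mul, map_add]
        ring
      rw [this]; exact add_mem hp hq
  | mul_X p i hp =>
      have hkey := key N a i
      have : p * X i * eA N a - eval (bpt N a) (p * X i) • eA N a =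
          (p * eA N a - eval (bpt N a) p • eA N a) * X i +
          eval (bpt N a) p • (X i * eA N a - bpt N a i • eA N a) := by
        rw [map_mul, eval_X]
        simp only [smul_eq_C_mul, map_mul]
        ring
      rw [this]
      exact add_mem (Ideal.mul_mem_right _ _ hp) (Submodule.smul_of_tower_mem _ _ hkey)

lemma sum_eA (N : ℕ) : ∑ a : Fin N → Bool, eA N a = 1 := by
  have h := Finset.prod_univ_sum (fun _ : Fin N => (Finset.univ : Finset Bool))
    (fun i b => if b then X i else (1 - X i : MvPolynomial (Fin N) ℂ))
  rw [Fintype.piFinset_univ] at h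
  have h2 : ∀ i : Fin N,
      (∑ b : Bool, if b then X i else (1 - X i : MvPolynomial (Fin N) ℂ)) = 1 := by
    intro i
    simp [Fintype.sum_bool]
  rw [Finset.prod_congr rfl (fun i _ => h2 i), Finset.prod_const_one] at h
  simp only [eA]
  exact h.symm

lemma interp (N : ℕ) (f : MvPolynomial (Fin N) ℂ) :
    f - ∑ a : Fin N → Bool, eval (bpt N a) f • eA N a ∈ boolIdeal N := by
  have : f - ∑ a : Fin N → Bool, eval (bpt N a) f • eA N a =
      ∑ a : Fin N → Bool, (f * eA N a - eval (bpt N a) f • eA N a) := by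
    rw [Finset.sum_sub_distrib, ← Finset.mul_sum, sum_eA, mul_one]
  rw [this]
  exact Ideal.sum_mem _ (fun a _ => absorb N a f)

lemma eA_mem (N : ℕ) (J : Ideal (MvPolynomial (Fin N) ℂ)) (hJ : boolIdeal N ≤ J)
    (a : Fin N → Bool) (g : MvPolynomial (Fin N) ℂ) (hg : g ∈ J)
    (hga : eval (bpt N a) g ≠ 0) : eA N a ∈ J := by
  have h1 : g * eA N a - eval (bpt N a) g • eA N a ∈ J := hJ (absorb N a g)
  have h2 : g * eA N a ∈ J := Ideal.mul_mem_right _ _ hg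
  have h3 : eval (bpt N a) g • eA N a ∈ J := by
    have := sub_mem h2 h1
    simpa using this
  have := Submodule.smul_of_tower_mem J (eval (bpt N a) g)⁻¹ h3
  rwa [smul_smul, inv_mul_cancel₀ hga, one_smul] at this

/-- Strong boolean Nullstellensatz: for an ideal `J ⊇ I`, a polynomial lies in `J` iff it
vanishes on `Z(J)`; in particular every ideal containing `I` is radical. -/
theorem strong_boolean_nullstellensatz (N : ℕ) (J : Ideal (MvPolynomial (Fin N) ℂ))
    (hJ : boolIdeal N ≤ J) :
    (∀ f : MvPolynomial (Fin N) ℂ, f ∈ J ↔ ∀ x ∈ idealVariety N J, eval x f = 0) ∧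
      J.IsRadical := by
  have main : ∀ f : MvPolynomial (Fin N) ℂ,
      f ∈ J ↔ ∀ x ∈ idealVariety N J, eval x f = 0 := by
    intro f
    constructor
    · intro hf x hx
      exact hx.2 f hf
    · intro hf
      have hsum : (∑ a : Fin N → Bool, eval (bpt N a) f • eA N a) ∈ J := by
        apply Ideal.sum_mem
        intro a _
        by_cases hv : bpt N a ∈ idealVariety N J
        · rw [hf (bpt N a) hv, zero_smul]
          exact zero_mem _
        · obtain ⟨g, hg, hge⟩ : ∃ g ∈ J, eval (bpt N a) g ≠ 0 := by
            by_contra hc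
            push_neg at hc
            exact hv ⟨bpt_isBoolean N a, hc⟩
          exact Submodule.smul_of_tower_mem _ _ (eA_mem N J hJ a g hg hge)
      have := add_mem (hJ (interp N f)) hsum
      simpa using this
  refine ⟨main, ?_⟩
  intro f hf
  obtain ⟨n, hn⟩ := hf
  rw [main f]
  intro x hx
  have := (main (f ^ n)).mp hn x hx
  rw [map_pow] at this
  exact (pow_eq_zero_iff'.mp this).1
end

section
/- (Elimination for boolean ideals) Let J be an ideal of ℂ[x_1, …, x_N] containing the ideal I generated by {x_i² − x_i : 1 ≤ i ≤ N}. Then a polynomial q involving only the variable x_1 belongs to J if and only if q(a_1) = 0 for every point a = (a_1, …, a_N) in the boolean variety Z(J), i.e. J ∩ ℂ[x_1] is exactly the set of univariate polynomials vanishing on the projection of Z(J) to the first coordinate. -/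
open MvPolynomial

namespace BoolElim

variable {N : ℕ}

/-- The boolean point attached to a `Bool`-vector. -/
def pt (b : Fin N → Bool) : Fin N → ℂ := fun i => if b i then 1 else 0

/-- The factor polynomials of the indicator polynomial. -/
noncomputable def f (b : Fin N → Bool) (i : Fin N) : MvPolynomial (Fin N) ℂ :=
  if b i then X i else 1 - X i

/-- The indicator polynomial of a boolean point. -/
noncomputable def eB (b : Fin N → Bool) : MvPolynomial (Fin N) ℂ := ∏ i, f b i

lemma sum_eB : ∑ b : Fin N → Bool, eB b = (1 : MvPolynomial (Fin N) ℂ) := by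
  have h := Fintype.prod_sum (κ := fun _ : Fin N => Bool)
    (f := fun i (j : Bool) => if j then X i else (1 : MvPolynomial (Fin N) ℂ) - X i)
  simp only [eB, f]
  rw [← h]
  simp

lemma isBooleanPoint_pt (b : Fin N → Bool) : IsBooleanPoint N (pt b) := by
  intro i
  by_cases h : b i <;> simp [pt, h]

variable {J : Ideal (MvPolynomial (Fin N) ℂ)}

lemma gen_mem (hJ : boolIdeal N ≤ J) (i : Fin N) : X i ^ 2 - X i ∈ J :=
  hJ (Ideal.subset_span ⟨i, rfl⟩)

local notation "π" => Ideal.Quotient.mk J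

lemma mk_eB_mul_X (hJ : boolIdeal N ≤ J) (b : Fin N → Bool) (i : Fin N) :
    π (eB b * X i) = π (C (pt b i) * eB b) := by
  rw [Ideal.Quotient.eq]
  have hP : eB b = f b i * ∏ j ∈ Finset.univ.erase i, f b j :=
    (Finset.mul_prod_erase _ _ (Finset.mem_univ i)).symm
  set P : MvPolynomial (Fin N) ℂ := ∏ j ∈ Finset.univ.erase i, f b j
  cases h : b i
  · have : eB b * X i - C (pt b i) * eB b = (X i ^ 2 - X i) * (-P) := by
      rw [hP]; simp only [f, pt, h, if_false, Bool.false_eq_true, map_zero]; ring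
    rw [this]
    exact Ideal.mul_mem_right _ _ (gen_mem hJ i)
  · have : eB b * X i - C (pt b i) * eB b = (X i ^ 2 - X i) * P := by
      rw [hP]; simp only [f, pt, h, if_true, map_one]; ring
    rw [this]
    exact Ideal.mul_mem_right _ _ (gen_mem hJ i)

lemma mk_eB_mul_eB (hJ : boolIdeal N ≤ J) (b c : Fin N → Bool) :
    π (eB b) * π (eB c) = if b = c then π (eB b) else 0 := by
  rw [← map_mul]
  by_cases h : b = c
  · subst h
    rw [if_pos rfl, show eB b * eB b = ∏ i, (f b i * f b i) from
        (Finset.prod_mul_distrib).symm, eB, map_prod, map_prod]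
    refine Finset.prod_congr rfl fun i _ => ?_
    rw [Ideal.Quotient.eq]
    have : f b i * f b i - f b i = X i ^ 2 - X i := by
      cases h : b i <;> simp only [f, h, if_false, if_true, Bool.false_eq_true] <;> ring
    rw [this]; exact gen_mem hJ i
  · rw [if_neg h]
    obtain ⟨i, hi⟩ := Function.ne_iff.mp h
    rw [show eB b * eB c = ∏ j, (f b j * f c j) from (Finset.prod_mul_distrib).symm, map_prod]
    refine Finset.prod_eq_zero (Finset.mem_univ i) ?_
    rw [Ideal.Quotient.eq_zero_iff_mem]
    have : f b i * f c i = (X i ^ 2 - X i) * (-1) := by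
      cases hb : b i <;> cases hc : c i <;>
        first
        | exact absurd (hb.trans hc.symm) hi
        | · simp only [f, hb, hc, if_true, if_false, Bool.false_eq_true]; ring
    rw [this]; exact Ideal.mul_mem_right _ _ (gen_mem hJ i)

lemma mk_decomp (hJ : boolIdeal N ≤ J) (p : MvPolynomial (Fin N) ℂ) :
    π p = ∑ b : Fin N → Bool, π (C (eval (pt b) p)) * π (eB b) := by
  induction p using MvPolynomial.induction_on with
  | C a =>
      simp only [eval_C, ← map_mul]
      rw [← map_sum, ← Finset.mul_sum, sum_eB, mul_one]
  | add p q hp hq =>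
      simp only [eval_add, map_add, add_mul, Finset.sum_add_distrib, ← hp, ← hq]
  | mul_X p i hp =>
      rw [map_mul, hp, Finset.sum_mul]
      refine Finset.sum_congr rfl fun b _ => ?_
      rw [eval_mul, eval_X, mul_assoc, ← map_mul (Ideal.Quotient.mk J) (eB b) (X i),
        mk_eB_mul_X hJ b i, map_mul, ← mul_assoc, ← map_mul, ← C_mul]

lemma eB_mem (hJ : boolIdeal N ≤ J) (b : Fin N → Bool) (hb : pt b ∉ idealVariety N J) :
    eB b ∈ J := by
  have hbp := isBooleanPoint_pt b
  have : ∃ g ∈ J, eval (pt b) g ≠ 0 := by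
    by_contra hcon
    push_neg at hcon
    exact hb ⟨hbp, hcon⟩
  obtain ⟨g, hgJ, hg⟩ := this
  have h0 : π (eB b) * π g = 0 := by
    rw [Ideal.Quotient.eq_zero_iff_mem.mpr hgJ, mul_zero]
  rw [mk_decomp hJ g, Finset.mul_sum] at h0
  have h1 : ∀ c : Fin N → Bool,
      π (eB b) * (π (C (eval (pt c) g)) * π (eB c)) =
        if b = c then π (C (eval (pt c) g)) * π (eB b) else 0 := by
    intro c
    rw [← mul_assoc, mul_comm (π (eB b)), mul_assoc, mk_eB_mul_eB hJ b c]
    by_cases h : b = c <;> simp [h]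
  rw [Finset.sum_congr rfl fun c _ => h1 c, Finset.sum_ite_eq,
    if_pos (Finset.mem_univ b)] at h0
  have hmem : C (eval (pt b) g) * eB b ∈ J := by
    rw [← Ideal.Quotient.eq_zero_iff_mem, map_mul]; exact h0
  have heq : eB b = C (eval (pt b) g)⁻¹ * (C (eval (pt b) g) * eB b) := by
    rw [← mul_assoc, ← C_mul, inv_mul_cancel₀ hg, C_1, one_mul]
  rw [heq]
  exact Ideal.mul_mem_left _ _ hmem

lemma mem_iff (hJ : boolIdeal N ≤ J) (p : MvPolynomial (Fin N) ℂ) :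
    p ∈ J ↔ ∀ a ∈ idealVariety N J, eval a p = 0 := by
  constructor
  · exact fun hp a ha => ha.2 p hp
  · intro h
    rw [← Ideal.Quotient.eq_zero_iff_mem, mk_decomp hJ p]
    refine Finset.sum_eq_zero fun b _ => ?_
    by_cases hb : pt b ∈ idealVariety N J
    · rw [h _ hb, C_0, map_zero, zero_mul]
    · rw [Ideal.Quotient.eq_zero_iff_mem.mpr (eB_mem hJ b hb), mul_zero]

end BoolElim

/-- Elimination for boolean ideals: for an ideal `J ⊇ I`, a polynomial involving only `x₁`
belongs to `J` iff it vanishes at the first coordinate of every point of `Z(J)`. -/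
theorem boolean_elimination (N : ℕ) (hN : 0 < N) (J : Ideal (MvPolynomial (Fin N) ℂ))
    (hJ : boolIdeal N ≤ J) (q : Polynomial ℂ) :
    Polynomial.aeval (X (⟨0, hN⟩ : Fin N)) q ∈ J ↔
      ∀ a ∈ idealVariety N J, Polynomial.eval (a ⟨0, hN⟩) q = 0 := by
  have key : ∀ a : Fin N → ℂ,
      eval a (Polynomial.aeval (X (⟨0, hN⟩ : Fin N)) q) = Polynomial.eval (a ⟨0, hN⟩) q := by
    intro a
    rw [Polynomial.aeval_def, Polynomial.hom_eval₂]
    have h : (eval a).comp (algebraMap ℂ (MvPolynomial (Fin N) ℂ)) = RingHom.id ℂ := by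
      ext r; simp
    rw [h, eval_X]
    rfl
  rw [BoolElim.mem_iff hJ]
  exact ⟨fun h a ha => (key a) ▸ h a ha, fun h a ha => (key a).trans (h a ha)⟩
end
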